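/- arXiv:1602.05053 — 2 statements merged into one kernel-verified Lean document; each statement's English description precedes it below -/
import Mathlib

section
/- A category is abelian if and only if it is additive and Barr exact (i.e., regular with effective equivalence relations). -/
/-!
STATEMENT 7 (Tierney): a category is abelian if and only if it is additive
(preadditive with finite biproducts) and Barr exact (regular with effective
equivalence relations).
-/

open CategoryTheory CategoryTheory.Limits

/-- An internal equivalence relation: a jointly monic pair `r₁, r₂ : R ⟶ X` which is
reflexive, symmetric and transitive. -/
structure IsEquivalenceRelation {C : Type*} [Category C] {R X : C} (r₁ r₂ : R ⟶ X) : Prop where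
  jointly_mono : ∀ {T : C} (a b : T ⟶ R), a ≫ r₁ = b ≫ r₁ → a ≫ r₂ = b ≫ r₂ → a = b
  refl : ∃ ρ : X ⟶ R, ρ ≫ r₁ = 𝟙 X ∧ ρ ≫ r₂ = 𝟙 X
  symm : ∃ σ : R ⟶ R, σ ≫ r₁ = r₂ ∧ σ ≫ r₂ = r₁
  trans : ∀ {P : C} (p₁ p₂ : P ⟶ R), IsPullback p₁ p₂ r₂ r₁ →
    ∃ τ : P ⟶ R, τ ≫ r₁ = p₁ ≫ r₁ ∧ τ ≫ r₂ = p₂ ≫ r₂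

/-- A Barr exact category: finite limits, coequalizers of kernel pairs, regular
epimorphisms stable under pullback, and effective equivalence relations. -/
structure BarrExact (C : Type*) [Category C] : Prop where
  hasFiniteLimits : HasFiniteLimits C
  coeq_of_kernelPair : ∀ {R X Y : C} (r₁ r₂ : R ⟶ X) (f : X ⟶ Y),
    IsKernelPair f r₁ r₂ → HasCoequalizer r₁ r₂
  regularEpi_stable : ∀ {X Y Z P : C} (f : X ⟶ Y) (g : Z ⟶ Y) (p₁ : P ⟶ Z) (p₂ : P ⟶ X),
    Nonempty (RegularEpi f) → IsPullback p₁ p₂ g f → Nonempty (RegularEpi p₁)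
  effective : ∀ {R X : C} (r₁ r₂ : R ⟶ X), _root_.IsEquivalenceRelation r₁ r₂ →
    ∃ (Y : C) (f : X ⟶ Y), IsKernelPair f r₁ r₂

/-! In an abelian category a reflexive relation `(r₁, r₂)` is the kernel pair of the cokernel of
`r₁ - r₂`: two maps identified by that cokernel differ, after an epimorphic refinement, by a map
through `r₁ - r₂`, and the diagonal of the relation absorbs the difference.

Conversely, let the category be additive and Barr exact. For a mono `m : X ⟶ Y` the relation
`y ~ m x + y` on `Y` is an equivalence relation, and it is effective; so `m` is the kernel of the
quotient map and has a cokernel. Pullback stability of regular epis makes the second factor of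
`f = coequalizer.π ≫ coequalizer.desc f` (coequalizer of the kernel pair of `f`) a mono, which
gives all cokernels; when `f` is epi that factor is a normal mono and epi, hence an iso, so `f` is
the coequalizer of its kernel pair `(a, b)`, i.e. the cokernel of `a - b`. -/

section

variable {C : Type*} [Category C]

lemma isKernelPair_of_forall_exists_lift {R X Y : C} {f : X ⟶ Y} {r₁ r₂ : R ⟶ X}
    (w : r₁ ≫ f = r₂ ≫ f)
    (hmono : ∀ {T : C} (a b : T ⟶ R), a ≫ r₁ = b ≫ r₁ → a ≫ r₂ = b ≫ r₂ → a = b)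
    (hlift : ∀ {T : C} (x y : T ⟶ X), x ≫ f = y ≫ f → ∃ l : T ⟶ R, l ≫ r₁ = x ∧ l ≫ r₂ = y) :
    IsKernelPair f r₁ r₂ := by
  choose l hl₁ hl₂ using @hlift
  exact IsPullback.of_isLimit (PullbackCone.IsLimit.mk w (fun s => l s.fst s.snd s.condition)
    (fun s => hl₁ _ _ _) (fun s => hl₂ _ _ _)
    (fun s m h₁ h₂ => hmono m _ (by rw [h₁, hl₁]) (by rw [h₂, hl₂])))

section Abelian

variable [Abelian C]

lemma exists_lift_of_comp_cokernel_π_eq {R X T : C} {r₁ r₂ : R ⟶ X}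
    (hmono : ∀ {T : C} (a b : T ⟶ R), a ≫ r₁ = b ≫ r₁ → a ≫ r₂ = b ≫ r₂ → a = b)
    (hrefl : ∃ ρ : X ⟶ R, ρ ≫ r₁ = 𝟙 X ∧ ρ ≫ r₂ = 𝟙 X) {x y : T ⟶ X}
    (h : x ≫ cokernel.π (r₁ - r₂) = y ≫ cokernel.π (r₁ - r₂)) :
    ∃ l : T ⟶ R, l ≫ r₁ = x ∧ l ≫ r₂ = y := by
  obtain ⟨ρ, hρ₁, hρ₂⟩ := hrefl
  have hxy : (x - y) ≫ cokernel.π (r₁ - r₂) = 0 := by rw [Preadditive.sub_comp, h, sub_self]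
  obtain ⟨P, π, _, z, hz⟩ : ∃ (P : C) (π : P ⟶ T) (_ : Epi π) (z : P ⟶ R),
      π ≫ (x - y) = z ≫ (r₁ - r₂) :=
    (ShortComplex.cokernelSequence_exact (r₁ - r₂)).exact_up_to_refinements (x - y) hxy
  simp only [Preadditive.comp_sub] at hz
  -- over the cover `π`, `(x, y)` is `(z ≫ r₁, z ≫ r₂)` moved along the diagonal by `π ≫ y - z ≫ r₂`
  set w := z + (π ≫ y - z ≫ r₂) ≫ ρ
  have hw₁ : w ≫ r₁ = π ≫ x := by
    calc w ≫ r₁ = (z ≫ r₁ - z ≫ r₂) + π ≫ y := by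
          simp only [w, Preadditive.add_comp, Category.assoc, hρ₁, Category.comp_id]; abel
      _ = π ≫ x := by rw [← hz]; abel
  have hw₂ : w ≫ r₂ = π ≫ y := by
    simp only [w, Preadditive.add_comp, Category.assoc, hρ₂, Category.comp_id]
    abel
  have : Mono (biprod.lift r₁ r₂) := ⟨fun a b hab =>
    hmono a b (by simpa using hab =≫ biprod.fst) (by simpa using hab =≫ biprod.snd)⟩
  have : StrongEpi π := strongEpi_of_epi π
  have sq : CommSq w π (biprod.lift r₁ r₂) (biprod.lift x y) := ⟨by ext <;> simp [hw₁, hw₂]⟩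
  exact ⟨sq.lift, by simpa only [Category.assoc, biprod.lift_fst] using sq.fac_right =≫ biprod.fst,
    by simpa only [Category.assoc, biprod.lift_snd] using sq.fac_right =≫ biprod.snd⟩

lemma isKernelPair_cokernel_π_sub {R X : C} {r₁ r₂ : R ⟶ X}
    (hmono : ∀ {T : C} (a b : T ⟶ R), a ≫ r₁ = b ≫ r₁ → a ≫ r₂ = b ≫ r₂ → a = b)
    (hrefl : ∃ ρ : X ⟶ R, ρ ≫ r₁ = 𝟙 X ∧ ρ ≫ r₂ = 𝟙 X) :
    IsKernelPair (cokernel.π (r₁ - r₂)) r₁ r₂ :=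
  isKernelPair_of_forall_exists_lift
    (sub_eq_zero.mp (by rw [← Preadditive.sub_comp, cokernel.condition]))
    hmono (fun _ _ h => exists_lift_of_comp_cokernel_π_eq hmono hrefl h)

lemma nonempty_regularEpi_of_isPullback {X Y Z P : C} {f : X ⟶ Y} {g : Z ⟶ Y} {p₁ : P ⟶ Z}
    {p₂ : P ⟶ X} [Epi f] (hp : IsPullback p₁ p₂ g f) : Nonempty (RegularEpi p₁) := by
  have : Epi p₁ := by rw [← hp.isoPullback_hom_fst]; infer_instance
  exact (IsRegularEpiCategory.regularEpiOfEpi p₁).regularEpi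

lemma barrExact_of_abelian : BarrExact C where
  hasFiniteLimits := inferInstance
  coeq_of_kernelPair _ _ _ _ := inferInstance
  regularEpi_stable f _ _ _ hf hp := by
    have := hf.some.epi
    exact nonempty_regularEpi_of_isPullback hp
  effective _ _ hrel := ⟨_, _, isKernelPair_cokernel_π_sub hrel.jointly_mono hrel.refl⟩

end Abelian

section Preadditive

variable [Preadditive C] {X Y : C}

lemma nonempty_normalEpi_of_isColimit_cofork {W : C} {a b : W ⟶ X} {e : X ⟶ Y}
    {w : a ≫ e = b ≫ e} (h : IsColimit (Cofork.ofπ e w)) : Nonempty (NormalEpi e) :=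
  ⟨{ W := W, g := a - b, w := by rw [Preadditive.sub_comp, w, sub_self]
     isColimit := Preadditive.isColimitCokernelCoforkOfCofork h }⟩

variable [HasBinaryBiproducts C]

lemma isEquivalenceRelation_snd_desc (m : X ⟶ Y) [Mono m] :
    _root_.IsEquivalenceRelation (biprod.snd : X ⊞ Y ⟶ Y) (biprod.desc m (𝟙 Y)) where
  jointly_mono a b h₁ h₂ := by
    simp only [biprod.desc_eq, Category.comp_id, Preadditive.comp_add, h₁] at h₂
    have h₃ : (a ≫ biprod.fst) ≫ m = (b ≫ biprod.fst) ≫ m := by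
      simpa only [Category.assoc] using add_right_cancel h₂
    exact biprod.hom_ext _ _ (cancel_mono m |>.mp h₃) h₁
  refl := ⟨biprod.inr, biprod.inr_snd, biprod.inr_desc _ _⟩
  symm := ⟨biprod.lift (-biprod.fst) (biprod.desc m (𝟙 Y)), biprod.lift_snd _ _, by
    rw [biprod.lift_desc, Category.comp_id, biprod.desc_eq, Category.comp_id,
      Preadditive.neg_comp]
    abel⟩
  trans p₁ p₂ hp := by
    refine ⟨biprod.lift (p₁ ≫ biprod.fst + p₂ ≫ biprod.fst) (p₁ ≫ biprod.snd),
      biprod.lift_snd _ _, ?_⟩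
    have hw := hp.w
    simp only [biprod.desc_eq, Preadditive.comp_add, Category.comp_id] at hw ⊢
    simp only [biprod.lift_fst_assoc, biprod.lift_snd, Preadditive.add_comp, Category.assoc, ← hw]
    abel

lemma comp_eq_zero_of_snd_comp_eq_desc_comp {Z : C} {m : X ⟶ Y} {q : Y ⟶ Z}
    (w : biprod.snd ≫ q = biprod.desc m (𝟙 Y) ≫ q) : m ≫ q = 0 := by
  simpa using (biprod.inl ≫= w).symm

lemma nonempty_normalMono_of_isKernelPair {Z : C} {m : X ⟶ Y} [Mono m] {q : Y ⟶ Z}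
    (h : IsKernelPair q (biprod.snd : X ⊞ Y ⟶ Y) (biprod.desc m (𝟙 Y))) :
    Nonempty (NormalMono m) := by
  refine ⟨{ Z := Z, g := q, w := comp_eq_zero_of_snd_comp_eq_desc_comp h.w
            isLimit := KernelFork.IsLimit.ofι' m _ fun k hk => ?_ }⟩
  obtain ⟨u, h₁, h₂⟩ := h.lift' 0 k (by rw [zero_comp, hk])
  refine ⟨u ≫ biprod.fst, ?_⟩
  rw [biprod.desc_eq, Category.comp_id, Preadditive.comp_add, h₁, add_zero] at h₂
  simpa only [Category.assoc] using h₂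

lemma hasCokernel_of_hasCoequalizer_snd_desc (m : X ⟶ Y)
    [HasCoequalizer (biprod.snd : X ⊞ Y ⟶ Y) (biprod.desc m (𝟙 Y))] : HasCokernel m :=
  HasColimit.mk ⟨_, CokernelCofork.IsColimit.ofπ _
    (comp_eq_zero_of_snd_comp_eq_desc_comp (coequalizer.condition _ _))
    (fun k hk => coequalizer.desc k (by simp [biprod.desc_eq, hk]))
    (fun _ _ => coequalizer.π_desc _ _)
    (fun _ _ _ hl => coequalizer.hom_ext (by rw [coequalizer.π_desc, hl]))⟩

end Preadditive

namespace BarrExact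

lemma surjective_up_to_refinements_of_regularEpi (hB : BarrExact C) {X Q T : C} {q : X ⟶ Q}
    (hq : Nonempty (RegularEpi q)) (u : T ⟶ Q) :
    ∃ (P : C) (π : P ⟶ T) (_ : Epi π) (x : P ⟶ X), π ≫ u = x ≫ q := by
  have := hB.hasFiniteLimits
  obtain ⟨hπ⟩ := hB.regularEpi_stable q u _ _ hq (IsPullback.of_hasPullback u q)
  exact ⟨_, _, hπ.epi, _, pullback.condition⟩

lemma mono_coequalizer_desc (hB : BarrExact C) {R X Y : C} {a b : R ⟶ X} {f : X ⟶ Y}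
    (hf : IsKernelPair f a b) [HasCoequalizer a b] : Mono (coequalizer.desc f hf.w) := by
  set q := coequalizer.π a b
  set t := coequalizer.desc f hf.w
  have hqt : q ≫ t = f := coequalizer.π_desc f hf.w
  have hq : Nonempty (RegularEpi q) := ⟨coequalizerRegular a b⟩
  refine ⟨fun u v huv => ?_⟩
  obtain ⟨P, π, _, x, hx⟩ := hB.surjective_up_to_refinements_of_regularEpi hq u
  obtain ⟨P', π', _, x', hx'⟩ := hB.surjective_up_to_refinements_of_regularEpi hq (π ≫ v)
  have hf' : (π' ≫ x) ≫ f = x' ≫ f := by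
    calc (π' ≫ x) ≫ f = π' ≫ π ≫ u ≫ t := by rw [← hqt, Category.assoc, ← reassoc_of% hx]
      _ = (π' ≫ π ≫ v) ≫ t := by rw [huv]; simp only [Category.assoc]
      _ = x' ≫ f := by rw [hx', Category.assoc, hqt]
  have hq' : (π' ≫ x) ≫ q = x' ≫ q := by
    obtain ⟨l, hl₁, hl₂⟩ := hf.lift' _ _ hf'
    rw [← hl₁, ← hl₂, Category.assoc, Category.assoc, coequalizer.condition]
  rw [← cancel_epi (π' ≫ π)]
  calc (π' ≫ π) ≫ u = (π' ≫ x) ≫ q := by rw [Category.assoc, hx, Category.assoc]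
    _ = x' ≫ q := hq'
    _ = (π' ≫ π) ≫ v := by rw [← hx', Category.assoc]

section Additive

variable [Preadditive C] [HasBinaryBiproducts C] {X Y : C}

lemma nonempty_normalMono (hB : BarrExact C) (m : X ⟶ Y) [Mono m] : Nonempty (NormalMono m) := by
  obtain ⟨_, _, h⟩ := hB.effective _ _ (isEquivalenceRelation_snd_desc m)
  exact nonempty_normalMono_of_isKernelPair h

lemma hasCokernel_of_mono (hB : BarrExact C) (m : X ⟶ Y) [Mono m] : HasCokernel m := by
  obtain ⟨_, g, h⟩ := hB.effective _ _ (isEquivalenceRelation_snd_desc m)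
  have := hB.coeq_of_kernelPair _ _ g h
  exact hasCokernel_of_hasCoequalizer_snd_desc m

lemma hasCokernel (hB : BarrExact C) (f : X ⟶ Y) : HasCokernel f := by
  have := hB.hasFiniteLimits
  have hf := IsKernelPair.of_hasPullback f
  have := hB.coeq_of_kernelPair _ _ f hf
  have := hB.mono_coequalizer_desc hf
  have := hB.hasCokernel_of_mono (coequalizer.desc f hf.w)
  rw [← coequalizer.π_desc f hf.w]
  infer_instance

lemma nonempty_normalEpi (hB : BarrExact C) (e : X ⟶ Y) [Epi e] : Nonempty (NormalEpi e) := by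
  have := hB.hasFiniteLimits
  have he := IsKernelPair.of_hasPullback e
  have := hB.coeq_of_kernelPair _ _ e he
  have := hB.mono_coequalizer_desc he
  have : Epi (coequalizer.desc e he.w) := epi_of_epi_fac (coequalizer.π_desc e he.w)
  obtain ⟨ht⟩ := hB.nonempty_normalMono (coequalizer.desc e he.w)
  have := isIso_of_regularMono_of_epi _ ht.regularMono
  exact nonempty_normalEpi_of_isColimit_cofork (w := he.w)
    ((coequalizerIsCoequalizer _ _).ofIsoColimit
      (Cofork.ext (asIso (coequalizer.desc e he.w)) (coequalizer.π_desc e he.w)))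

end Additive

end BarrExact

lemma abelian_of_barrExact [Preadditive C] [HasFiniteBiproducts C] (hB : BarrExact C) :
    Nonempty (Abelian C) := by
  have := hB.hasFiniteLimits
  have := hasBinaryBiproducts_of_finite_biproducts C
  have : HasCokernels C := ⟨hB.hasCokernel⟩
  have : IsNormalMonoCategory C := ⟨hB.nonempty_normalMono⟩
  have : IsNormalEpiCategory C := ⟨hB.nonempty_normalEpi⟩
  exact ⟨{}⟩

end

/-- Tierney's theorem: abelian = additive + Barr exact. -/
theorem abelian_iff_additive_barrExact (C : Type*) [Category C] :
    Nonempty (Abelian C) ↔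
      ∃ p : Preadditive C,
        @HasFiniteBiproducts C _ (@Preadditive.preadditiveHasZeroMorphisms C _ p)
          ∧ BarrExact C := by
  constructor
  · rintro ⟨_⟩
    exact ⟨inferInstance, Abelian.hasFiniteBiproducts, barrExact_of_abelian⟩
  · rintro ⟨_, _, hB⟩
    exact abelian_of_barrExact hB
end

section
/- Let X_{-1} = 0 ⊆ X_0 ⊆ X_1 ⊆ ... ⊆ X_d = X be a finite filtration of an object X of an abelian category A, and let H be a homological δ-functor (model of T) on pairs of A with H_{p+q}(X_p, X_{p-1}) = 0 for all q ≠ 0 (where H_n(A,B) := T_n(A/B)). Then the complex C_p := H_p(X_p, X_{p-1}) with differentials the composites H_p(X_p, X_{p-1}) → H_{p-1}(X_{p-1}) → H_{p-1}(X_{p-1}, X_{p-2}) computes H_n(X): H_n(C_•) ≅ H_n(X) for all n. -/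
open CategoryTheory CategoryTheory.Limits

/-- An exact covariant homological δ-functor between abelian categories, indexed by `ℤ`. -/
structure DeltaFunctorZ (C D : Type*) [Category C] [Category D] [Abelian C] [Abelian D] where
  /-- the component functors `T n` -/
  T : ℤ → C ⥤ D
  /-- the connecting morphisms associated to a short exact sequence -/
  δ : ∀ (S : ShortComplex C), S.ShortExact → ∀ n : ℤ, (T (n + 1)).obj S.X₃ ⟶ (T n).obj S.X₁
  δ_natural : ∀ {S S' : ShortComplex C} (hS : S.ShortExact) (hS' : S'.ShortExact)
      (φ : S ⟶ S') (n : ℤ),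
      δ S hS n ≫ (T n).map φ.τ₁ = (T (n + 1)).map φ.τ₃ ≫ δ S' hS' n
  zero₁ : ∀ (S : ShortComplex C) (_ : S.ShortExact) (n : ℤ),
      (T n).map S.f ≫ (T n).map S.g = 0
  exact₁ : ∀ (S : ShortComplex C) (hS : S.ShortExact) (n : ℤ),
      (ShortComplex.mk _ _ (zero₁ S hS n)).Exact
  zero₂ : ∀ (S : ShortComplex C) (hS : S.ShortExact) (n : ℤ),
      (T (n + 1)).map S.g ≫ δ S hS n = 0
  exact₂ : ∀ (S : ShortComplex C) (hS : S.ShortExact) (n : ℤ),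
      (ShortComplex.mk _ _ (zero₂ S hS n)).Exact
  zero₃ : ∀ (S : ShortComplex C) (hS : S.ShortExact) (n : ℤ),
      δ S hS n ≫ (T n).map S.f = 0
  exact₃ : ∀ (S : ShortComplex C) (hS : S.ShortExact) (n : ℤ),
      (ShortComplex.mk _ _ (zero₃ S hS n)).Exact

variable {C D : Type*} [Category C] [Category D] [Abelian C] [Abelian D]

/-- The short exact sequence `0 → X_p → X_{p+1} → X_{p+1}/X_p → 0` of a filtration. -/
noncomputable abbrev filtSES (F : ℤ → C) (ι : ∀ p : ℤ, F p ⟶ F (p + 1)) (p : ℤ) :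
    ShortComplex C :=
  ShortComplex.mk (ι p) (cokernel.π (ι p)) (cokernel.condition _)

/-- The differential of the "cellular" complex `C_p = H_p(X_p, X_{p-1})`: the composite
`H_{p+1}(X_{p+1}, X_p) → H_p(X_p) → H_p(X_p, X_{p-1})` of the connecting morphism of the
triple with the canonical projection. -/
noncomputable def cellDiff (DF : DeltaFunctorZ C D) (F : ℤ → C)
    (ι : ∀ p : ℤ, F p ⟶ F (p + 1)) (hSE : ∀ p : ℤ, (filtSES F ι p).ShortExact) (p : ℤ) :
    (DF.T (p + 1)).obj (cokernel (ι p)) ⟶ (DF.T p).obj (cokernel (ι (p - 1))) :=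
  DF.δ (filtSES F ι p) (hSE p) p ≫
    (DF.T p).map (eqToHom (congrArg F (show p = p - 1 + 1 by omega)) ≫ cokernel.π (ι (p - 1)))

/-- index correction for composing consecutive cellular differentials -/
noncomputable def cellCast (DF : DeltaFunctorZ C D) (F : ℤ → C)
    (ι : ∀ p : ℤ, F p ⟶ F (p + 1)) (m : ℤ) :
    ((DF.T (m + 1)).obj (cokernel (ι (m + 1 - 1))) : D) = (DF.T (m + 1)).obj (cokernel (ι m)) :=
  congrArg (DF.T (m + 1)).obj (congrArg (fun t => cokernel (ι t)) (show m + 1 - 1 = m by omega))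

private lemma helperEq (DF : DeltaFunctorZ C D) (F : ℤ → C) (ι : ∀ p : ℤ, F p ⟶ F (p + 1))
    (n : ℤ) (a b : ℤ) (h : a = b) (e1 : F (b + 1) = F (a + 1))
    (e2 : ((DF.T n).obj (cokernel (ι a))) = (DF.T n).obj (cokernel (ι b))) :
    (DF.T n).map (eqToHom e1 ≫ cokernel.π (ι a)) ≫ eqToHom e2
      = (DF.T n).map (cokernel.π (ι b)) := by
  subst h
  simp

private def cofork_congr {X Y Z : D} {f f' : X ⟶ Y} (h : f = f') (π : Y ⟶ Z)
    (w : f ≫ π = 0) (w' : f' ≫ π = 0) (hc : IsColimit (CokernelCofork.ofπ π w)) :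
    IsColimit (CokernelCofork.ofπ π w') := by
  subst h
  exact hc

/-- for a finite filtration `0 = X_{-1} ⊆ X_0 ⊆ ⋯ ⊆ X_d = X` in an abelian
category and a homological δ-functor `(T_n)` with `H_{p+q}(X_p, X_{p-1}) = 0` for `q ≠ 0`
(where `H_n(A,B) := T_n(A/B)`), the cellular complex `C_p = H_p(X_p, X_{p-1})` with the
connecting differentials computes `H_n(X)`: `H_n(C_•) ≅ H_n(X)` for all `n`. -/
theorem cellular_complex_computes_homology (DF : DeltaFunctorZ C D) (F : ℤ → C)
    (ι : ∀ p : ℤ, F p ⟶ F (p + 1)) (hmono : ∀ p : ℤ, Mono (ι p))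
    (hSE : ∀ p : ℤ, (filtSES F ι p).ShortExact)
    (hzero : ∀ p : ℤ, p < 0 → IsZero (F p))
    (d : ℤ) (hd : ∀ p : ℤ, d ≤ p → IsIso (ι p))
    (hcell : ∀ p q : ℤ, q ≠ 0 → IsZero ((DF.T (p + q)).obj (cokernel (ι (p - 1))))) :
    ∃ hdd : ∀ m : ℤ,
        (cellDiff DF F ι hSE (m + 1) ≫ eqToHom (cellCast DF F ι m)) ≫ cellDiff DF F ι hSE m
          = 0,
      ∀ n : ℤ, Nonempty
        ((ShortComplex.mk _ _ (hdd n)).homology ≅ (DF.T (n + 1)).obj (F d)) := by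
  classical
  -- `T n` kills zero objects
  have Tzero : ∀ (n : ℤ) (X : C), IsZero X → IsZero ((DF.T n).obj X) := by
    intro n X hX
    have hS : (ShortComplex.mk (𝟙 X) (𝟙 X)
        (by rw [hX.eq_of_src (𝟙 X) 0]; simp)).ShortExact :=
      { exact := ShortComplex.exact_of_isZero_X₂ _ hX }
    have h := DF.zero₁ _ hS n
    simp only [CategoryTheory.Functor.map_id, Category.id_comp] at h
    rw [IsZero.iff_id_eq_zero]
    exact h
  -- reformulation of the cellularity hypothesis
  have hcell' : ∀ p q : ℤ, q ≠ p + 1 → IsZero ((DF.T q).obj (cokernel (ι p))) := by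
    intro p q hq
    have h := hcell (p + 1) (q - (p + 1)) (by omega)
    rw [show p + 1 + (q - (p + 1)) = q by omega, show p + 1 - 1 = p by omega] at h
    exact h
  -- vanishing above the filtration degree: `T_m (F p) = 0` for `p < m`
  have vstep : ∀ a m : ℤ, m ≠ a + 1 → IsZero ((DF.T m).obj (F a)) →
      IsZero ((DF.T m).obj (F (a + 1))) := by
    intro a m hm ha
    have he := DF.exact₁ (filtSES F ι a) (hSE a) m
    exact he.isZero_X₂ (ha.eq_of_src _ _) ((hcell' a m hm).eq_of_tgt _ _)
  have vclimb : ∀ (k : ℕ) (a m : ℤ), a < 0 → a + k < m →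
      IsZero ((DF.T m).obj (F (a + k))) := by
    intro k
    induction k with
    | zero =>
      intro a m ha _
      simpa using Tzero m _ (hzero a ha)
    | succ k ih =>
      intro a m ha hm
      rw [show (a + ((k + 1 : ℕ) : ℤ)) = (a + k) + 1 by push_cast; ring]
      exact vstep (a + k) m (by push_cast at hm ⊢; omega)
        (ih a m ha (by push_cast at hm ⊢; omega))
  have vanish : ∀ p m : ℤ, p < m → IsZero ((DF.T m).obj (F p)) := by
    intro p m hpm
    have h := vclimb (p - (-(p.natAbs : ℤ) - 1)).toNat (-(p.natAbs : ℤ) - 1) m (by omega)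
      (by rw [Int.toNat_of_nonneg (by omega)]; omega)
    rw [Int.toNat_of_nonneg (by omega),
      show (-(p.natAbs : ℤ) - 1) + (p - (-(p.natAbs : ℤ) - 1)) = p by ring] at h
    exact h
  -- in the stable range, `T m (ι p)` is an isomorphism
  have midIso : ∀ p m : ℤ, p ≠ m → p ≠ m - 1 → IsIso ((DF.T m).map (ι p)) := by
    intro p m h1 h2
    have e3 := DF.exact₃ (filtSES F ι p) (hSE p) m
    have e1 := DF.exact₁ (filtSES F ι p) (hSE p) m
    have hmo : Mono ((DF.T m).map (ι p)) :=
      e3.mono_g ((hcell' p (m + 1) (by omega)).eq_of_src _ _)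
    have hep : Epi ((DF.T m).map (ι p)) :=
      e1.epi_f ((hcell' p m (by omega)).eq_of_tgt _ _)
    exact isIso_of_mono_of_epi _
  -- the composite defining the cellular differential, without the index casts
  have dtwo : ∀ m : ℤ, cellDiff DF F ι hSE (m + 1) ≫ eqToHom (cellCast DF F ι m)
      = DF.δ (filtSES F ι (m + 1)) (hSE (m + 1)) (m + 1)
          ≫ (DF.T (m + 1)).map (cokernel.π (ι m)) := by
    intro m
    unfold cellDiff
    rw [Category.assoc]
    congr 1
    exact helperEq DF F ι (m + 1) (m + 1 - 1) m (by omega) _ _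
  -- the cellular complex is a complex
  have hdd : ∀ m : ℤ,
      (cellDiff DF F ι hSE (m + 1) ≫ eqToHom (cellCast DF F ι m)) ≫ cellDiff DF F ι hSE m
        = 0 := by
    intro m
    rw [dtwo m]
    have hz : (DF.T (m + 1)).map (cokernel.π (ι m)) ≫ DF.δ (filtSES F ι m) (hSE m) m = 0 :=
      DF.zero₂ _ (hSE m) m
    have hc : cellDiff DF F ι hSE m = DF.δ (filtSES F ι m) (hSE m) m ≫
        (DF.T m).map (eqToHom (congrArg F (show m = m - 1 + 1 by omega))
          ≫ cokernel.π (ι (m - 1))) := rfl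
    rw [hc, Category.assoc, reassoc_of% hz, zero_comp, comp_zero]
  refine ⟨hdd, fun n => ?_⟩
  -- notation for the relevant maps
  set δ₂ : (DF.T (n + 1 + 1)).obj (cokernel (ι (n + 1))) ⟶ (DF.T (n + 1)).obj (F (n + 1)) :=
    DF.δ (filtSES F ι (n + 1)) (hSE (n + 1)) (n + 1) with hδ₂
  set δ₁ : (DF.T (n + 1)).obj (cokernel (ι n)) ⟶ (DF.T n).obj (F n) :=
    DF.δ (filtSES F ι n) (hSE n) n with hδ₁
  set j : (DF.T (n + 1)).obj (F (n + 1)) ⟶ (DF.T (n + 1)).obj (cokernel (ι n)) :=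
    (DF.T (n + 1)).map (cokernel.π (ι n)) with hj
  set π' : (DF.T (n + 1)).obj (F (n + 1)) ⟶ (DF.T (n + 1)).obj (F (n + 1 + 1)) :=
    (DF.T (n + 1)).map (ι (n + 1)) with hπ'
  set ψ : F n ⟶ cokernel (ι (n - 1)) :=
    eqToHom (congrArg F (show n = n - 1 + 1 by omega)) ≫ cokernel.π (ι (n - 1)) with hψ
  have hcd : cellDiff DF F ι hSE n = δ₁ ≫ (DF.T n).map ψ := rfl
  -- `j` is a monomorphism
  have hjmono : Mono j :=
    (DF.exact₁ (filtSES F ι n) (hSE n) (n + 1)).mono_g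
      ((vanish n (n + 1) (by omega)).eq_of_src _ _)
  -- `T n ψ` is a monomorphism
  have hψmono : Mono ((DF.T n).map ψ) := by
    have h1 : Mono ((DF.T n).map (cokernel.π (ι (n - 1)))) :=
      (DF.exact₁ (filtSES F ι (n - 1)) (hSE (n - 1)) n).mono_g
        ((vanish (n - 1) n (by omega)).eq_of_src _ _)
    rw [hψ, Functor.map_comp]
    exact mono_comp _ _
  -- `j` is the kernel of `δ₁`
  have hz₂ : j ≫ δ₁ = 0 := DF.zero₂ _ (hSE n) n
  have hk : IsLimit (KernelFork.ofι j hz₂) := by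
    haveI : Mono (ShortComplex.mk j δ₁ hz₂).f := hjmono
    exact (DF.exact₂ (filtSES F ι n) (hSE n) n).fIsKernel
  -- hence `j` is the kernel of the cellular differential `cellDiff n`
  have wi : j ≫ cellDiff DF F ι hSE n = 0 := by
    rw [hcd, ← Category.assoc, hz₂, zero_comp]
  have hi : IsLimit (KernelFork.ofι j wi) := isKernelCompMono hk ((DF.T n).map ψ) hcd
  -- the induced map from `C_{n+2}` to the cycles is `δ₂`
  have wf : (ShortComplex.mk _ _ (hdd n)).f ≫ cellDiff DF F ι hSE n = 0 := (hdd n)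
  have f'eq : hi.lift (KernelFork.ofι (ShortComplex.mk _ _ (hdd n)).f
      (ShortComplex.mk _ _ (hdd n)).zero) = δ₂ := by
    rw [← cancel_mono j]
    have hfac := Fork.IsLimit.lift_ι (s := KernelFork.ofι j wi) hi
      (t := KernelFork.ofι (ShortComplex.mk _ _ (hdd n)).f (ShortComplex.mk _ _ (hdd n)).zero)
    simp only [Fork.ι_ofι] at hfac
    rw [hfac]
    exact dtwo n
  -- `π'` is an epimorphism with kernel `δ₂`
  have hπepi : Epi π' :=
    (DF.exact₁ (filtSES F ι (n + 1)) (hSE (n + 1)) (n + 1)).epi_f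
      ((hcell' (n + 1) (n + 1) (by omega)).eq_of_tgt _ _)
  have hz₃ : δ₂ ≫ π' = 0 := DF.zero₃ _ (hSE (n + 1)) (n + 1)
  have gc : IsColimit (CokernelCofork.ofπ π' hz₃) := by
    haveI : Epi (ShortComplex.mk δ₂ π' hz₃).g := hπepi
    exact (DF.exact₃ (filtSES F ι (n + 1)) (hSE (n + 1)) (n + 1)).gIsCokernel
  have wπ : hi.lift (KernelFork.ofι (ShortComplex.mk _ _ (hdd n)).f
      (ShortComplex.mk _ _ (hdd n)).zero) ≫ π' = 0 := by
    rw [f'eq]; exact hz₃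
  have hπc : IsColimit (CokernelCofork.ofπ π' wπ) := cofork_congr f'eq.symm π' hz₃ wπ gc
  -- the left homology data
  let lhd : (ShortComplex.mk _ _ (hdd n)).LeftHomologyData :=
    ⟨(DF.T (n + 1)).obj (F (n + 1)), (DF.T (n + 1)).obj (F (n + 1 + 1)), j, π', wi, hi, wπ, hπc⟩
  -- the homology is `T_{n+1} (F (n+2))`
  have e0 : (ShortComplex.mk _ _ (hdd n)).homology ≅ (DF.T (n + 1)).obj (F (n + 1 + 1)) :=
    lhd.homologyIso
  -- stable range isomorphisms up to `F d`
  set m₀ : ℤ := min d (n + 2) with hm₀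
  have step : ∀ p : ℤ, m₀ ≤ p → IsIso ((DF.T (n + 1)).map (ι p)) := by
    intro p hp
    rcases le_or_gt d p with h | h
    · haveI := hd p h
      infer_instance
    · exact midIso p (n + 1) (by omega) (by omega)
  have chain : ∀ (k : ℕ) (a : ℤ), m₀ ≤ a →
      Nonempty ((DF.T (n + 1)).obj (F a) ≅ (DF.T (n + 1)).obj (F (a + k))) := by
    intro k
    induction k with
    | zero =>
      intro a _
      exact ⟨eqToIso (congrArg (DF.T (n + 1)).obj (congrArg F (by push_cast; ring)))⟩
    | succ k ih =>
      intro a ha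
      obtain ⟨e⟩ := ih a ha
      haveI := step (a + k) (by push_cast; omega)
      exact ⟨e ≪≫ asIso ((DF.T (n + 1)).map (ι (a + k))) ≪≫
        eqToIso (congrArg (DF.T (n + 1)).obj (congrArg F (by push_cast; ring)))⟩
  obtain ⟨e₁⟩ := chain (n + 1 + 1 - m₀).toNat m₀ le_rfl
  obtain ⟨e₂⟩ := chain (d - m₀).toNat m₀ le_rfl
  have h1 : m₀ + ((n + 1 + 1 - m₀).toNat : ℤ) = n + 1 + 1 := by omega
  have h2 : m₀ + ((d - m₀).toNat : ℤ) = d := by omega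
  exact ⟨e0 ≪≫ (eqToIso (congrArg (DF.T (n + 1)).obj (congrArg F h1))).symm ≪≫ e₁.symm ≪≫
    e₂ ≪≫ eqToIso (congrArg (DF.T (n + 1)).obj (congrArg F h2))⟩
end
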